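/- arXiv:1804.02322 — 8 statements merged into one kernel-verified Lean document; each statement's English description precedes it below -/
import Mathlib

section
/- In any Tarski algebra, the relation defined by a ≤ b iff a·b = 1 is a partial order with greatest element 1, and for all a, b the element (a·b)·b is the least upper bound of a and b with respect to ≤ (so a Tarski algebra is a join-semilattice with top under this order). -/
/-! From self-distributivity `T3` one gets `a·1 = 1` and `a·(b·a) = 1`, which make `x ↦ x·d`
antitone. Applying this twice to `a ≤ c` gives `(a·b)·b ≤ (c·b)·b`, and `T4` rewrites
`(c·b)·b = (b·c)·c`, which is `c` once `b ≤ c`. -/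

section TarskiAlgebra

variable {α : Type*} {op : α → α → α} {one : α}

theorem tarski_op_one (T2 : ∀ a, op a a = one)
    (T3 : ∀ a b c, op a (op b c) = op (op a b) (op a c)) (a : α) : op a one = one := by
  calc op a one = op a (op a a) := by rw [T2]
    _ = op (op a a) (op a a) := T3 a a a
    _ = one := T2 _

theorem tarski_op_op_left (T2 : ∀ a, op a a = one)
    (T3 : ∀ a b c, op a (op b c) = op (op a b) (op a c)) (a b : α) : op a (op b a) = one := by
  rw [T3, T2, tarski_op_one T2 T3]

theorem tarski_op_op_self (T1 : ∀ a, op one a = a) (T2 : ∀ a, op a a = one)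
    (T3 : ∀ a b c, op a (op b c) = op (op a b) (op a c)) (a b : α) :
    op a (op a b) = op a b := by
  rw [T3, T2, T1]

theorem tarski_op_antitone_left (T1 : ∀ a, op one a = a) (T2 : ∀ a, op a a = one)
    (T3 : ∀ a b c, op a (op b c) = op (op a b) (op a c)) {a b : α} (hab : op a b = one)
    (d : α) : op (op b d) (op a d) = one := by
  have hd : op a d = op a (op b d) := by rw [T3, hab, T1]
  rw [hd]
  exact tarski_op_op_left T2 T3 _ _

theorem tarski_eq_of_op_eq_one (T1 : ∀ a, op one a = a)
    (T4 : ∀ a b, op (op a b) b = op (op b a) a) {a b : α}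
    (hab : op a b = one) (hba : op b a = one) : a = b := by
  calc a = op (op b a) a := by rw [hba, T1]
    _ = op (op a b) b := (T4 a b).symm
    _ = b := by rw [hab, T1]

theorem tarski_op_eq_one_trans (T1 : ∀ a, op one a = a) (T2 : ∀ a, op a a = one)
    (T3 : ∀ a b c, op a (op b c) = op (op a b) (op a c)) {a b c : α}
    (hab : op a b = one) (hbc : op b c = one) : op a c = one := by
  calc op a c = op (op a b) (op a c) := by rw [hab, T1]
    _ = op a (op b c) := (T3 a b c).symm
    _ = one := by rw [hbc, tarski_op_one T2 T3]

theorem tarski_le_sup_left (T1 : ∀ a, op one a = a) (T2 : ∀ a, op a a = one)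
    (T3 : ∀ a b c, op a (op b c) = op (op a b) (op a c)) (a b : α) :
    op a (op (op a b) b) = one := by
  rw [T3, tarski_op_op_self T1 T2 T3, T2]

theorem tarski_le_sup_right (T1 : ∀ a, op one a = a) (T2 : ∀ a, op a a = one)
    (T3 : ∀ a b c, op a (op b c) = op (op a b) (op a c))
    (T4 : ∀ a b, op (op a b) b = op (op b a) a) (a b : α) :
    op b (op (op a b) b) = one := by
  rw [T4]
  exact tarski_le_sup_left T1 T2 T3 b a

theorem tarski_sup_le (T1 : ∀ a, op one a = a) (T2 : ∀ a, op a a = one)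
    (T3 : ∀ a b c, op a (op b c) = op (op a b) (op a c))
    (T4 : ∀ a b, op (op a b) b = op (op b a) a) {a b c : α}
    (hac : op a c = one) (hbc : op b c = one) : op (op (op a b) b) c = one := by
  have hcb : op (op c b) (op a b) = one := tarski_op_antitone_left T1 T2 T3 hac b
  have hc : op (op c b) b = c := by rw [T4, hbc, T1]
  simpa only [hc] using tarski_op_antitone_left T1 T2 T3 hcb b

end TarskiAlgebra

/-- In any Tarski algebra, `a ≤ b ↔ a·b = 1` is a partial order with greatest
element `1`, and `(a·b)·b` is the least upper bound of `a` and `b`. -/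
theorem tarski_join_semilattice {α : Type*} (op : α → α → α) (one : α)
    (T1 : ∀ a, op one a = a) (T2 : ∀ a, op a a = one)
    (T3 : ∀ a b c, op a (op b c) = op (op a b) (op a c))
    (T4 : ∀ a b, op (op a b) b = op (op b a) a) :
    let le : α → α → Prop := fun a b => op a b = one
    (∀ a, le a a) ∧
    (∀ a b, le a b → le b a → a = b) ∧
    (∀ a b c, le a b → le b c → le a c) ∧
    (∀ a, le a one) ∧
    (∀ a b, le a (op (op a b) b) ∧ le b (op (op a b) b) ∧
      ∀ c, le a c → le b c → le (op (op a b) b) c) :=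
  ⟨T2, fun _ _ => tarski_eq_of_op_eq_one T1 T4, fun _ _ _ => tarski_op_eq_one_trans T1 T2 T3,
    tarski_op_one T2 T3, fun a b => ⟨tarski_le_sup_left T1 T2 T3 a b,
      tarski_le_sup_right T1 T2 T3 T4 a b, fun _ => tarski_sup_le T1 T2 T3 T4⟩⟩
end

section
/- Let (X, 𝒮) be a Tarski set with 𝒮 nonempty, and let Δ(X) = {U ⊆ X : there exist W ∈ 𝒮 and H ⊆ W with U = Wᶜ ∪ H}. Then X ∈ Δ(X) and Δ(X) is closed under the operation A·B = Aᶜ ∪ B; consequently (Δ(X), ·, X) satisfies the Tarski algebra axioms T1–T4 (it is a Tarski algebra of sets). -/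
/-!
Every member `Wᶜ ∪ H` of `Δ(X)` is squeezed between `Wᶜ` and `X`, and conversely any `U ⊇ Wᶜ`
equals `Wᶜ ∪ (U ∩ W)`; so `Δ(X)` is an upper set of `Set X`, nonempty because `𝒮` is. It therefore
contains `X` and every `Aᶜ ∪ B ⊇ B` with `B ∈ Δ(X)`. Since `Aᶜ ∪ B` is the Heyting implication
`A ⇨ B` of the Boolean algebra `Set X`, T1–T3 hold in any Heyting algebra, and T4 holds because
in a Boolean algebra `(a ⇨ b) ⇨ b = a ⊔ b` is symmetric in `a` and `b`.
-/

/-- The dual of a Tarski set `(X, 𝒮)`: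
`Δ(X) = {U ⊆ X : ∃ W ∈ 𝒮, ∃ H ⊆ W, U = Wᶜ ∪ H}`. -/
def TDelta {X : Type*} (𝒮 : Set (Set X)) : Set (Set X) :=
  {U | ∃ W ∈ 𝒮, ∃ H ⊆ W, U = Wᶜ ∪ H}

open Set

theorem himp_himp_himp_distrib {α : Type*} [GeneralizedHeytingAlgebra α] (a b c : α) :
    a ⇨ b ⇨ c = (a ⇨ b) ⇨ a ⇨ c := by
  rw [himp_himp, himp_himp, himp_inf_self, inf_comm]

theorem himp_himp_self_eq_sup {α : Type*} [BooleanAlgebra α] (a b : α) :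
    (a ⇨ b) ⇨ b = a ⊔ b := by
  rw [himp_eq, himp_eq, compl_sup, compl_compl, sup_inf_left, sup_compl_eq_top, top_inf_eq,
    sup_comm]

theorem Set.compl_union_eq_himp {X : Type*} (A B : Set X) : Aᶜ ∪ B = A ⇨ B := by
  rw [himp_eq, union_comm]; rfl

section TDelta

variable {X : Type*} {𝒮 : Set (Set X)}

theorem isUpperSet_tDelta (𝒮 : Set (Set X)) : IsUpperSet (TDelta 𝒮) := by
  rintro U V hUV ⟨W, hW, H, -, rfl⟩
  refine ⟨W, hW, V ∩ W, inter_subset_right, ?_⟩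
  rw [union_inter_distrib_left, compl_union_self, inter_univ]
  exact (union_eq_right.mpr (subset_union_left.trans hUV)).symm

theorem compl_mem_tDelta {W : Set X} (hW : W ∈ 𝒮) : Wᶜ ∈ TDelta 𝒮 :=
  ⟨W, hW, ∅, empty_subset W, (union_empty Wᶜ).symm⟩

theorem univ_mem_tDelta (h𝒮 : 𝒮.Nonempty) : univ ∈ TDelta 𝒮 :=
  let ⟨_, hW⟩ := h𝒮
  isUpperSet_tDelta 𝒮 (subset_univ _) (compl_mem_tDelta hW)

theorem compl_union_mem_tDelta (A : Set X) {B : Set X} (hB : B ∈ TDelta 𝒮) :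
    Aᶜ ∪ B ∈ TDelta 𝒮 :=
  isUpperSet_tDelta 𝒮 subset_union_right hB

end TDelta

theorem tarskiSet_dual_algebra_general {X : Type*} (𝒮 : Set (Set X))
    (h𝒮 : 𝒮.Nonempty) :
    Set.univ ∈ TDelta 𝒮 ∧
    (∀ A ∈ TDelta 𝒮, ∀ B ∈ TDelta 𝒮, Aᶜ ∪ B ∈ TDelta 𝒮) ∧
    (∀ A : Set X, Set.univᶜ ∪ A = A) ∧
    (∀ A : Set X, Aᶜ ∪ A = Set.univ) ∧
    (∀ A B C : Set X, Aᶜ ∪ (Bᶜ ∪ C) = (Aᶜ ∪ B)ᶜ ∪ (Aᶜ ∪ C)) ∧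
    (∀ A B : Set X, (Aᶜ ∪ B)ᶜ ∪ B = (Bᶜ ∪ A)ᶜ ∪ A) := by
  refine ⟨univ_mem_tDelta h𝒮, fun A _ B hB => compl_union_mem_tDelta A hB, ?_⟩
  simp only [compl_union_eq_himp]
  refine ⟨fun _ => top_himp, fun _ => himp_self, himp_himp_himp_distrib, fun A B => ?_⟩
  rw [himp_himp_self_eq_sup, himp_himp_self_eq_sup, sup_comm]

/-- For a Tarski set `(X, 𝒮)` with `𝒮` nonempty: `X ∈ Δ(X)`, `Δ(X)` is closed under
`A·B = Aᶜ ∪ B`, and this operation with constant `X` satisfies the Tarski axioms T1–T4. -/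
theorem tarskiSet_dual_algebra {X : Type*} [Nonempty X] (𝒮 : Set (Set X))
    (h𝒮 : 𝒮.Nonempty) :
    Set.univ ∈ TDelta 𝒮 ∧
    (∀ A ∈ TDelta 𝒮, ∀ B ∈ TDelta 𝒮, Aᶜ ∪ B ∈ TDelta 𝒮) ∧
    (∀ A : Set X, Set.univᶜ ∪ A = A) ∧
    (∀ A : Set X, Aᶜ ∪ A = Set.univ) ∧
    (∀ A B C : Set X, Aᶜ ∪ (Bᶜ ∪ C) = (Aᶜ ∪ B)ᶜ ∪ (Aᶜ ∪ C)) ∧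
    (∀ A B : Set X, (Aᶜ ∪ B)ᶜ ∪ B = (Bᶜ ∪ A)ᶜ ∪ A) :=
  tarskiSet_dual_algebra_general 𝒮 h𝒮
end

section
/- In a finite Tarski algebra T, for a filter K the following are equivalent: (i) K is a prime filter; (ii) K is a maximal filter; (iii) there is a coatom x of T such that K = {y ∈ T : ¬(y ≤ x)} (the complement of the principal down-set of x). -/
/-- A filter (deductive system) of a Tarski algebra: contains `one` and closed
under modus ponens. -/
def IsTFilter {α : Type*} (op : α → α → α) (one : α) (K : Set α) : Prop :=
  one ∈ K ∧ ∀ a b : α, a ∈ K → op a b ∈ K → b ∈ K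

/-- The induced order of a Tarski algebra: `a ≤ b` iff `a·b = 1`. -/
def tle {α : Type*} (op : α → α → α) (one : α) (a b : α) : Prop := op a b = one

/-- A prime filter: a proper filter such that `a ∨ b = (a·b)·b ∈ K` implies
`a ∈ K` or `b ∈ K`. -/
def IsPrimeTFilter {α : Type*} (op : α → α → α) (one : α) (K : Set α) : Prop :=
  IsTFilter op one K ∧ K ≠ Set.univ ∧
    ∀ a b : α, op (op a b) b ∈ K → a ∈ K ∨ b ∈ K

/-- A maximal filter: a proper filter whose only proper extension among filters
is the whole algebra. -/
def IsMaxTFilter {α : Type*} (op : α → α → α) (one : α) (K : Set α) : Prop :=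
  IsTFilter op one K ∧ K ≠ Set.univ ∧
    ∀ F : Set α, IsTFilter op one F → K ⊆ F → F = K ∨ F = Set.univ

/-- A coatom: a maximal element of `T \ {1}` with respect to the induced order. -/
def IsTCoatom {α : Type*} (op : α → α → α) (one : α) (x : α) : Prop :=
  x ≠ one ∧ ∀ y : α, tle op one x y → y = x ∨ y = one

/-!
Maximal ⇒ prime: if `a ∉ K`, then `{y | a·y ∈ K}` is a filter strictly containing `K`, hence
everything, so `a·b ∈ K` and modus ponens turns `a ∨ b ∈ K` into `b ∈ K`.
Prime ⇒ coatom: by primeness `Kᶜ` is closed under joins, so in the finite case it has a greatest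
element `x`, and `K` is the complement of `↓x`; primeness then forces `x` to be a coatom.
Coatom ⇒ maximal: a filter meeting `↓x` contains `x`, and `x` together with
`K = {y | ¬ y ≤ x}` generates everything, since for `y ≤ x` both `x·y ∈ K` and
`(x·y)·y = (y·x)·x = x`.
-/

structure IsTarskiAlgebra {α : Type*} (op : α → α → α) (one : α) : Prop where
  one_op : ∀ a, op one a = a
  op_self : ∀ a, op a a = one
  op_op_distrib : ∀ a b c, op a (op b c) = op (op a b) (op a c)
  op_op_comm : ∀ a b, op (op a b) b = op (op b a) a

section

variable {α : Type*} {op : α → α → α} {one : α}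

namespace IsTarskiAlgebra

variable (h : IsTarskiAlgebra op one)
include h

theorem op_one (a : α) : op a one = one := by
  conv_lhs => rw [← h.op_self a]
  rw [h.op_op_distrib, h.op_self]

theorem op_op_self_left (a b : α) : op a (op a b) = op a b := by
  rw [h.op_op_distrib, h.op_self, h.one_op]

theorem tle_refl (a : α) : tle op one a a := h.op_self a

theorem tle_op (a b : α) : tle op one b (op a b) := by
  rw [tle, h.op_op_distrib, h.op_self, h.op_one]

theorem tle_trans {a b c : α} (hab : tle op one a b) (hbc : tle op one b c) :
    tle op one a c := by
  have := h.op_op_distrib a b c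
  rwa [hbc, hab, h.op_one, h.one_op, eq_comm] at this

theorem tle_antisymm {a b : α} (hab : tle op one a b) (hba : tle op one b a) : a = b :=
  calc a = op (op b a) a := by rw [hba, h.one_op]
    _ = op (op a b) b := h.op_op_comm b a
    _ = b := by rw [hab, h.one_op]

theorem tle_sup_left (a b : α) : tle op one a (op (op a b) b) := by
  rw [tle, h.op_op_distrib, h.op_op_self_left, h.op_self]

theorem tle_sup_right (a b : α) : tle op one b (op (op a b) b) := h.tle_op _ _

theorem op_tle_op_right {a b c : α} (hbc : tle op one b c) :
    tle op one (op a b) (op a c) := by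
  rw [tle, ← h.op_op_distrib, hbc, h.op_one]

abbrev toPreorder : Preorder α where
  le := tle op one
  le_refl := h.tle_refl
  le_trans _ _ _ := h.tle_trans

end IsTarskiAlgebra

theorem IsTFilter.mem_of_tle {F : Set α} (hF : IsTFilter op one F) {a b : α} (ha : a ∈ F)
    (hab : tle op one a b) : b ∈ F :=
  hF.2 a b ha (hab ▸ hF.1)

theorem IsTFilter.preimage_op (h : IsTarskiAlgebra op one) {K : Set α}
    (hK : IsTFilter op one K) (a : α) : IsTFilter op one {y | op a y ∈ K} := by
  refine ⟨by simpa only [Set.mem_ofPred_eq, h.op_one] using hK.1, fun p q hp hpq => ?_⟩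
  rw [Set.mem_ofPred_eq, h.op_op_distrib] at hpq
  exact hK.2 _ _ hp hpq

theorem IsMaxTFilter.isPrimeTFilter (h : IsTarskiAlgebra op one) {K : Set α}
    (hK : IsMaxTFilter op one K) : IsPrimeTFilter op one K := by
  obtain ⟨hF, hne, hmax⟩ := hK
  refine ⟨hF, hne, fun a b hab => or_iff_not_imp_left.2 fun ha => ?_⟩
  have hsub : K ⊆ {y | op a y ∈ K} := fun k hk => hF.mem_of_tle hk (h.tle_op a k)
  have haF : a ∈ {y | op a y ∈ K} := by simpa only [Set.mem_ofPred_eq, h.op_self] using hF.1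
  rcases hmax _ (hF.preimage_op h a) hsub with hKa | hKa
  · exact absurd (hKa ▸ haF) ha
  · have hb : op a b ∈ K := (Set.ext_iff.1 hKa b).2 trivial
    exact hF.2 _ _ hb hab

namespace IsTCoatom

variable (h : IsTarskiAlgebra op one) {x : α} (hx : IsTCoatom op one x)
include h hx

theorem op_eq_self {a : α} (ha : ¬ tle op one a x) : op a x = x :=
  (hx.2 _ (h.tle_op a x)).resolve_right ha

theorem isTFilter_compl_tle : IsTFilter op one {y | ¬ tle op one y x} := by
  refine ⟨fun h1 => hx.1 ((h.one_op x).symm.trans h1), fun a b ha hab hb => hab ?_⟩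
  simpa only [tle, hx.op_eq_self h ha] using h.op_tle_op_right (a := a) hb

theorem isMaxTFilter_compl_tle : IsMaxTFilter op one {y | ¬ tle op one y x} := by
  refine ⟨hx.isTFilter_compl_tle h, fun hK => ?_, fun F hF hKF => ?_⟩
  · exact (Set.eq_univ_iff_forall.1 hK x : ¬ tle op one x x) (h.tle_refl x)
  refine or_iff_not_imp_left.2 fun hFK => Set.eq_univ_of_forall fun y => ?_
  obtain ⟨a, haF, hax⟩ : ∃ a ∈ F, tle op one a x := by
    by_contra! hcon
    exact hFK (hKF.antisymm' fun a ha => hcon a ha)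
  have hxF : x ∈ F := hF.mem_of_tle haF hax
  by_cases hyx : tle op one y x
  · have hxy : ¬ tle op one (op x y) x := fun hcon => hx.1 <| by
      have := h.op_op_comm x (op x y)
      rwa [h.op_op_self_left, h.op_self, hcon, h.one_op, eq_comm] at this
    refine hF.2 _ y (hKF hxy) ?_
    rwa [h.op_op_comm, hyx, h.one_op]
  · exact hKF hyx

end IsTCoatom

namespace IsPrimeTFilter

variable (h : IsTarskiAlgebra op one) {K : Set α} (hK : IsPrimeTFilter op one K)
include h hK

theorem exists_greatest_compl [Finite α] : ∃ x ∉ K, ∀ y ∉ K, tle op one y x := by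
  let := h.toPreorder
  obtain ⟨a, ha⟩ : Kᶜ.Nonempty := Set.nonempty_compl.2 hK.2.1
  obtain ⟨x, hxK, hxmax⟩ := (Set.toFinite Kᶜ).exists_maximal ⟨a, ha⟩
  refine ⟨x, hxK, fun y hy => h.tle_trans (h.tle_sup_left y x) ?_⟩
  have hjoin : op (op y x) x ∉ K := fun hj => (hK.2.2 y x hj).elim hy hxK
  exact hxmax hjoin (h.tle_sup_right y x)

theorem isTCoatom_of_eq_compl_tle {x : α} (hKx : K = {y | ¬ tle op one y x}) :
    IsTCoatom op one x := by
  subst hKx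
  have hx1 : x ≠ one := fun hx => hK.1.1 (hx ▸ h.tle_refl x)
  refine ⟨hx1, fun y hxy => or_iff_not_imp_left.2 fun hyx => ?_⟩
  have hyK : ¬ tle op one y x := fun hyx' => hyx (h.tle_antisymm hyx' hxy)
  have hyxK : tle op one (op y x) x := by
    by_contra hcon
    exact hK.1.2 y x hyK hcon (h.tle_refl x)
  have hyx_eq : op y x = x := h.tle_antisymm hyxK (h.tle_op y x)
  have := h.op_op_comm x y
  rwa [hxy, h.one_op, hyx_eq, h.op_self] at this

theorem exists_isTCoatom [Finite α] :
    ∃ x, IsTCoatom op one x ∧ K = {y | ¬ tle op one y x} := by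
  obtain ⟨x, hxK, hxgt⟩ := hK.exists_greatest_compl h
  have hKx : K = {y | ¬ tle op one y x} := Set.ext fun y =>
    ⟨fun hy hyx => hxK (hK.1.mem_of_tle hy hyx), fun hyx => by_contra fun hy => hyx (hxgt y hy)⟩
  exact ⟨x, hK.isTCoatom_of_eq_compl_tle h hKx, hKx⟩

end IsPrimeTFilter

end

theorem finite_tarski_prime_iff_maximal_general {α : Type*} [Finite α]
    (op : α → α → α) (one : α)
    (T1 : ∀ a, op one a = a) (T2 : ∀ a, op a a = one)
    (T3 : ∀ a b c, op a (op b c) = op (op a b) (op a c))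
    (T4 : ∀ a b, op (op a b) b = op (op b a) a)
    (K : Set α) :
    (IsPrimeTFilter op one K ↔ IsMaxTFilter op one K) ∧
    (IsPrimeTFilter op one K ↔
      ∃ x : α, IsTCoatom op one x ∧ K = {y : α | ¬ tle op one y x}) := by
  have h : IsTarskiAlgebra op one := ⟨T1, T2, T3, T4⟩
  have max_of_coatom : (∃ x, IsTCoatom op one x ∧ K = {y | ¬ tle op one y x}) →
      IsMaxTFilter op one K := by
    rintro ⟨x, hx, rfl⟩
    exact hx.isMaxTFilter_compl_tle h
  have coatom_of_prime (hK : IsPrimeTFilter op one K) := hK.exists_isTCoatom h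
  have prime_of_max (hK : IsMaxTFilter op one K) := hK.isPrimeTFilter h
  exact ⟨⟨max_of_coatom ∘ coatom_of_prime, prime_of_max⟩,
    ⟨coatom_of_prime, prime_of_max ∘ max_of_coatom⟩⟩

/-- In a finite Tarski algebra, a filter is prime iff it is maximal iff it is
the complement of the principal down-set of some coatom. -/
theorem finite_tarski_prime_iff_maximal {α : Type*} [Finite α]
    (op : α → α → α) (one : α)
    (T1 : ∀ a, op one a = a) (T2 : ∀ a, op a a = one)
    (T3 : ∀ a b c, op a (op b c) = op (op a b) (op a c))
    (T4 : ∀ a b, op (op a b) b = op (op b a) a)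
    (K : Set α) (hK : IsTFilter op one K) :
    (IsPrimeTFilter op one K ↔ IsMaxTFilter op one K) ∧
    (IsPrimeTFilter op one K ↔
      ∃ x : α, IsTCoatom op one x ∧ K = {y : α | ¬ tle op one y x}) :=
  finite_tarski_prime_iff_maximal_general op one T1 T2 T3 T4 K
end

section
/- Let 𝒞 be a cover of a finite set S. Then 𝒞 is unary (i.e., md(x) is a singleton for every x ∈ S) if and only if for all K₁, K₂ ∈ 𝒞 and every x ∈ K₁ ∩ K₂ there exists K ∈ 𝒞 with x ∈ K and K ⊆ K₁ ∩ K₂. -/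
/-- The minimal description of `x` with respect to a cover `𝒞`:
the minimal members of `𝒞` containing `x`. -/
def md {S : Type*} (𝒞 : Set (Set S)) (x : S) : Set (Set S) :=
  {A | A ∈ 𝒞 ∧ x ∈ A ∧ ∀ B ∈ 𝒞, x ∈ B → B ⊆ A → B = A}

section MinimalDescription

variable {S : Type*} {𝒞 : Set (Set S)} {x : S} {A K : Set S}

lemma exists_mem_md_subset (h𝒞 : 𝒞.Finite) (hK : K ∈ 𝒞) (hx : x ∈ K) :
    ∃ A ∈ md 𝒞 x, A ⊆ K := by
  obtain ⟨A, ⟨hA𝒞, hxA, hAK⟩, hmin⟩ :=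
    (h𝒞.subset fun B hB => hB.1 : {B | B ∈ 𝒞 ∧ x ∈ B ∧ B ⊆ K}.Finite).exists_minimal
      ⟨K, hK, hx, subset_rfl⟩
  exact ⟨A, ⟨hA𝒞, hxA, fun B hB hxB hBA =>
    hBA.antisymm (hmin ⟨hB, hxB, hBA.trans hAK⟩ hBA)⟩, hAK⟩

lemma subset_of_forall_mem_md_eq (h𝒞 : 𝒞.Finite) (huniq : ∀ B ∈ md 𝒞 x, B = A)
    (hK : K ∈ 𝒞) (hx : x ∈ K) : A ⊆ K := by
  obtain ⟨B, hB, hBK⟩ := exists_mem_md_subset h𝒞 hK hx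
  exact huniq B hB ▸ hBK

lemma eq_of_mem_md_of_mem_md
    (hinter : ∀ K₁ ∈ 𝒞, ∀ K₂ ∈ 𝒞, ∀ x ∈ K₁ ∩ K₂, ∃ K ∈ 𝒞, x ∈ K ∧ K ⊆ K₁ ∩ K₂)
    {B : Set S} (hA : A ∈ md 𝒞 x) (hB : B ∈ md 𝒞 x) : A = B := by
  obtain ⟨K, hK, hxK, hKAB⟩ := hinter A hA.1 B hB.1 x ⟨hA.2.1, hB.2.1⟩
  rw [← hA.2.2 K hK hxK (hKAB.trans Set.inter_subset_left),
    ← hB.2.2 K hK hxK (hKAB.trans Set.inter_subset_right)]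

end MinimalDescription

/-- A cover `𝒞` of a finite set `S` is unary (every `md(x)` is a singleton) iff
for all `K₁, K₂ ∈ 𝒞` and every `x ∈ K₁ ∩ K₂` there is `K ∈ 𝒞` with
`x ∈ K ⊆ K₁ ∩ K₂`. -/
theorem unary_cover_iff {S : Type*} [Finite S] (𝒞 : Set (Set S))
    (hcov : ⋃₀ 𝒞 = Set.univ) :
    (∀ x : S, ∃! A : Set S, A ∈ md 𝒞 x) ↔
      ∀ K₁ ∈ 𝒞, ∀ K₂ ∈ 𝒞, ∀ x ∈ K₁ ∩ K₂, ∃ K ∈ 𝒞, x ∈ K ∧ K ⊆ K₁ ∩ K₂ := by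
  have h𝒞 : 𝒞.Finite := Set.toFinite 𝒞
  constructor
  · intro hunary K₁ hK₁ K₂ hK₂ x ⟨hx₁, hx₂⟩
    obtain ⟨A, hA, huniq⟩ := hunary x
    exact ⟨A, hA.1, hA.2.1, Set.subset_inter (subset_of_forall_mem_md_eq h𝒞 huniq hK₁ hx₁)
      (subset_of_forall_mem_md_eq h𝒞 huniq hK₂ hx₂)⟩
  · intro hinter x
    obtain ⟨K, hK, hxK⟩ := Set.sUnion_eq_univ_iff.1 hcov x
    obtain ⟨A, hA, -⟩ := exists_mem_md_subset h𝒞 hK hxK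
    exact ⟨A, hA, fun B hB => eq_of_mem_md_of_mem_md hinter hB hA⟩
end

section
/- Let 𝒞 be a cover of a set S (finite or infinite). The operator u2+ defined by X^{u2+} = ⋃{Fr(x) : x ∈ X} is idempotent, i.e., (X^{u2+})^{u2+} = X^{u2+} for all X ⊆ S (equivalently, u2+ is a topological closure operator, since it is always extensive, monotone, preserves ∅ and unions), if and only if the family {Fr(x) : x ∈ S} is a partition of S, i.e., for all a, b ∈ S either Fr(a) = Fr(b) or Fr(a) ∩ Fr(b) = ∅. -/
/-!
Since `y ∈ Fr x ↔ x ∈ Fr y`, and every `x` lies in `Fr x` because `𝒞` covers `S`,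
`u2+` is extensive and its idempotence amounts to `Fr y ⊆ Fr x` whenever `y ∈ Fr x`
(take `X = {x}`). By symmetry this says `Fr y = Fr x` whenever `y ∈ Fr x`, i.e. two
neighbourhoods sharing a point `z` both equal `Fr z`.
-/

/-- The indiscernibility (friends) of `x`: the union of all members of the
cover containing `x`. -/
def Fr {S : Type*} (𝒞 : Set (Set S)) (x : S) : Set S :=
  ⋃₀ {K | K ∈ 𝒞 ∧ x ∈ K}

/-- The second-type upper approximation `X^{u2+} = ⋃{Fr(x) : x ∈ X}`. -/
def u2p {S : Type*} (𝒞 : Set (Set S)) (X : Set S) : Set S :=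
  ⋃ x ∈ X, Fr 𝒞 x

section Fr

variable {S : Type*} {𝒞 : Set (Set S)}

theorem mem_Fr_comm {x y : S} : y ∈ Fr 𝒞 x ↔ x ∈ Fr 𝒞 y := by
  simp only [Fr, Set.mem_sUnion, Set.mem_ofPred_eq]
  exact exists_congr fun K => by tauto

theorem mem_Fr_self (hcov : ⋃₀ 𝒞 = Set.univ) (x : S) : x ∈ Fr 𝒞 x := by
  obtain ⟨K, hK, hxK⟩ : x ∈ ⋃₀ 𝒞 := hcov ▸ Set.mem_univ x
  exact ⟨K, ⟨hK, hxK⟩, hxK⟩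

theorem Fr_eq_of_mem_of_subset (h : ∀ x y : S, y ∈ Fr 𝒞 x → Fr 𝒞 y ⊆ Fr 𝒞 x) {x y : S}
    (hy : y ∈ Fr 𝒞 x) : Fr 𝒞 y = Fr 𝒞 x :=
  (h x y hy).antisymm (h y x (mem_Fr_comm.mp hy))

theorem Fr_eq_or_inter_eq_empty_iff (hcov : ⋃₀ 𝒞 = Set.univ) :
    (∀ a b : S, Fr 𝒞 a = Fr 𝒞 b ∨ Fr 𝒞 a ∩ Fr 𝒞 b = ∅) ↔
      ∀ x y : S, y ∈ Fr 𝒞 x → Fr 𝒞 y ⊆ Fr 𝒞 x := by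
  constructor
  · intro h x y hy
    rcases h x y with heq | hdisj
    · exact heq.symm.subset
    · exact absurd hdisj (Set.nonempty_iff_ne_empty.mp ⟨y, hy, mem_Fr_self hcov y⟩)
  · intro h a b
    refine or_iff_not_imp_right.mpr fun hne => ?_
    obtain ⟨z, hza, hzb⟩ := Set.nonempty_iff_ne_empty.mpr hne
    rw [← Fr_eq_of_mem_of_subset h hza, Fr_eq_of_mem_of_subset h hzb]

end Fr

section u2p

variable {S : Type*} {𝒞 : Set (Set S)}

theorem subset_u2p (hcov : ⋃₀ 𝒞 = Set.univ) (X : Set S) : X ⊆ u2p 𝒞 X :=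
  fun x hx => Set.mem_biUnion hx (mem_Fr_self hcov x)

theorem u2p_singleton (x : S) : u2p 𝒞 {x} = Fr 𝒞 x := by
  simp [u2p]

theorem u2p_u2p_subset_iff :
    (∀ X : Set S, u2p 𝒞 (u2p 𝒞 X) ⊆ u2p 𝒞 X) ↔
      ∀ x y : S, y ∈ Fr 𝒞 x → Fr 𝒞 y ⊆ Fr 𝒞 x := by
  constructor
  · intro h x y hy
    have hx := h {x}
    rw [u2p_singleton] at hx
    exact (Set.subset_biUnion_of_mem hy).trans hx
  · intro h X
    refine Set.iUnion₂_subset fun y hy => ?_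
    obtain ⟨x, hx, hyx⟩ := Set.mem_iUnion₂.mp hy
    exact (h x y hyx).trans (Set.subset_biUnion_of_mem hx)

end u2p

/-- `u2+` is idempotent (equivalently, a topological closure operator) iff
`{Fr(x) : x ∈ S}` forms a partition of `S`. -/
theorem u2p_closure_iff_partition {S : Type*} (𝒞 : Set (Set S))
    (hcov : ⋃₀ 𝒞 = Set.univ) :
    (∀ X : Set S, u2p 𝒞 (u2p 𝒞 X) = u2p 𝒞 X) ↔
      ∀ a b : S, Fr 𝒞 a = Fr 𝒞 b ∨ Fr 𝒞 a ∩ Fr 𝒞 b = ∅ := by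
  calc (∀ X : Set S, u2p 𝒞 (u2p 𝒞 X) = u2p 𝒞 X)
      ↔ ∀ X : Set S, u2p 𝒞 (u2p 𝒞 X) ⊆ u2p 𝒞 X :=
        forall_congr' fun X => ⟨Eq.subset, fun h => h.antisymm (subset_u2p hcov _)⟩
    _ ↔ ∀ x y : S, y ∈ Fr 𝒞 x → Fr 𝒞 y ⊆ Fr 𝒞 x := u2p_u2p_subset_iff
    _ ↔ ∀ a b : S, Fr 𝒞 a = Fr 𝒞 b ∨ Fr 𝒞 a ∩ Fr 𝒞 b = ∅ :=
        (Fr_eq_or_inter_eq_empty_iff hcov).symm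
end

section
/- Let 𝒞 be a cover of a set S (finite or infinite). The operator u3+ defined by X^{u3+} = ⋃{cfr(x) : x ∈ X} is a topological closure operator — i.e., X ⊆ X^{u3+} and (X^{u3+})^{u3+} = X^{u3+} for all X ⊆ S (u3+ always preserves ∅ and unions and is monotone) — if and only if every x ∈ S is a representative element of cfr(x) for the cover {cfr(z) : z ∈ S}, that is: x ∈ cfr(x), and for all z ∈ S, x ∈ cfr(z) implies cfr(x) ⊆ cfr(z). -/
/-- `cfr(x) = ⋃ md(x)`. -/
def cfr {S : Type*} (𝒞 : Set (Set S)) (x : S) : Set S := ⋃₀ md 𝒞 x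

/-- The third-type upper approximation `X^{u3+} = ⋃{cfr(x) : x ∈ X}`. -/
def u3p {S : Type*} (𝒞 : Set (Set S)) (X : Set S) : Set S :=
  ⋃ x ∈ X, cfr 𝒞 x

/-!
For any `f : S → Set S` the operator `X ↦ ⋃ x ∈ X, f x` commutes with unions, so extensivity
and the inclusion `X^{u3+u3+} ⊆ X^{u3+}` can be tested on singletons, where they read `x ∈ f x`
and `x ∈ f z → f x ⊆ f z`; the reverse inclusion is an instance of extensivity.
-/

section BiUnionOperator

variable {S : Type*} (f : S → Set S)

theorem forall_subset_biUnion_iff :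
    (∀ X : Set S, X ⊆ ⋃ x ∈ X, f x) ↔ ∀ x, x ∈ f x :=
  ⟨fun h x => by simpa using h {x}, fun h _ x hx => Set.mem_biUnion hx (h x)⟩

theorem forall_biUnion_biUnion_subset_iff :
    (∀ X : Set S, ⋃ y ∈ ⋃ x ∈ X, f x, f y ⊆ ⋃ x ∈ X, f x) ↔
      ∀ x z, x ∈ f z → f x ⊆ f z := by
  constructor
  · intro h x z hxz
    have hz : ⋃ y ∈ f z, f y ⊆ f z := by simpa using h {z}
    exact (Set.subset_biUnion_of_mem hxz).trans hz
  · intro h X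
    simp only [Set.iUnion_subset_iff, Set.mem_iUnion]
    rintro y ⟨x, hx, hyx⟩
    exact (h y x hyx).trans (Set.subset_biUnion_of_mem hx)

end BiUnionOperator

theorem u3p_closure_iff_representative_general {S : Type*} (𝒞 : Set (Set S)) :
    (∀ X : Set S, X ⊆ u3p 𝒞 X ∧ u3p 𝒞 (u3p 𝒞 X) = u3p 𝒞 X) ↔
      ∀ x : S, x ∈ cfr 𝒞 x ∧ ∀ z : S, x ∈ cfr 𝒞 z → cfr 𝒞 x ⊆ cfr 𝒞 z := by
  simp only [forall_and]
  rw [← forall_subset_biUnion_iff, ← forall_biUnion_biUnion_subset_iff]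
  refine and_congr_right fun hext => forall_congr' fun X => ?_
  exact ⟨Eq.subset, fun h => h.antisymm (hext _)⟩

/-- `u3+` is a topological closure operator (extensive and idempotent; it always
preserves `∅`, unions, and is monotone) iff every `x ∈ S` is a representative
element of `cfr(x)` for the cover `{cfr(z) : z ∈ S}`. -/
theorem u3p_closure_iff_representative {S : Type*} (𝒞 : Set (Set S))
    (hcov : ⋃₀ 𝒞 = Set.univ) :
    (∀ X : Set S, X ⊆ u3p 𝒞 X ∧ u3p 𝒞 (u3p 𝒞 X) = u3p 𝒞 X) ↔
      ∀ x : S, x ∈ cfr 𝒞 x ∧ ∀ z : S, x ∈ cfr 𝒞 z → cfr 𝒞 x ⊆ cfr 𝒞 z :=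
  u3p_closure_iff_representative_general 𝒞
end

section
/- Let T be a tolerance (reflexive, symmetric relation) on a set S, and let l_s, u_s, u_sb be the squeezed lower, upper, and bitten upper approximation operators. Then for every X ⊆ S, X^{u_sb} = ((Xᶜ)^{l_s})ᶜ; that is, the bitten upper approximation is the dual under complementation of the squeezed lower approximation. (Every element of S lies in some block, by Zorn's lemma from reflexivity of T.) -/
/-- A block of a tolerance `T`: a maximal subset `B` with `B × B ⊆ T`. -/
def IsBlock {S : Type*} (T : S → S → Prop) (B : Set S) : Prop :=
  (∀ a ∈ B, ∀ b ∈ B, T a b) ∧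
    ∀ C : Set S, B ⊆ C → (∀ a ∈ C, ∀ b ∈ C, T a b) → C = B

/-- Squeezed blocks: intersections of nonempty families of blocks. -/
def sqBlocks {S : Type*} (T : S → S → Prop) : Set (Set S) :=
  {A | ∃ Γ : Set (Set S), Γ.Nonempty ∧ (∀ B ∈ Γ, IsBlock T B) ∧ A = ⋂₀ Γ}

/-- The squeezed lower approximation. -/
def sqLower {S : Type*} (T : S → S → Prop) (X : Set S) : Set S :=
  ⋃₀ {A | A ∈ sqBlocks T ∧ A ⊆ X}

/-- The squeezed upper approximation. -/
def sqUpper {S : Type*} (T : S → S → Prop) (X : Set S) : Set S :=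
  ⋃₀ {A | A ∈ sqBlocks T ∧ (A ∩ X).Nonempty}

/-- The bitten upper approximation. -/
def sqBitten {S : Type*} (T : S → S → Prop) (X : Set S) : Set S :=
  sqUpper T X \ sqLower T Xᶜ

lemma exists_isBlock_mem {S : Type*} {T : S → S → Prop} (hrefl : ∀ a, T a a) (x : S) :
    ∃ B, IsBlock T B ∧ x ∈ B := by
  let tolerant : Set (Set S) := {C | x ∈ C ∧ ∀ a ∈ C, ∀ b ∈ C, T a b}
  have chain_ub : ∀ c ⊆ tolerant, IsChain (· ⊆ ·) c → c.Nonempty →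
      ∃ ub ∈ tolerant, ∀ s ∈ c, s ⊆ ub := by
    rintro c hc hchain ⟨c₀, hc₀⟩
    refine ⟨⋃₀ c, ⟨⟨c₀, hc₀, (hc hc₀).1⟩, ?_⟩, fun s hs => Set.subset_sUnion_of_mem hs⟩
    rintro a ⟨sa, hsa, ha⟩ b ⟨sb, hsb, hb⟩
    rcases hchain.total hsa hsb with h | h
    · exact (hc hsb).2 a (h ha) b hb
    · exact (hc hsa).2 a ha b (h hb)
  have singleton_tolerant : {x} ∈ tolerant := ⟨rfl, by rintro a rfl b rfl; exact hrefl _⟩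
  obtain ⟨B, -, hmax⟩ := zorn_subset_nonempty tolerant chain_ub {x} singleton_tolerant
  exact ⟨B, ⟨hmax.prop.2, fun C hBC hC => (hmax.eq_of_subset ⟨hBC hmax.prop.1, hC⟩ hBC).symm⟩,
    hmax.prop.1⟩

lemma IsBlock.mem_sqBlocks {S : Type*} {T : S → S → Prop} {B : Set S} (hB : IsBlock T B) :
    B ∈ sqBlocks T :=
  ⟨{B}, Set.singleton_nonempty B, by rintro _ rfl; exact hB, Set.sInter_singleton B |>.symm⟩

/-- Every point lies in a block, and a block either lies in `Xᶜ` or meets `X`. -/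
lemma sqLower_compl_union_sqUpper {S : Type*} {T : S → S → Prop} (hrefl : ∀ a, T a a)
    (X : Set S) : sqLower T Xᶜ ∪ sqUpper T X = Set.univ := by
  refine Set.eq_univ_of_forall fun x => ?_
  obtain ⟨B, hB, hxB⟩ := exists_isBlock_mem hrefl x
  by_cases hBX : B ⊆ Xᶜ
  · exact Or.inl ⟨B, ⟨hB.mem_sqBlocks, hBX⟩, hxB⟩
  · obtain ⟨y, hyB, hyX⟩ := Set.not_subset.mp hBX
    exact Or.inr ⟨B, ⟨hB.mem_sqBlocks, y, hyB, not_not.mp hyX⟩, hxB⟩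

theorem sqBitten_eq_compl_sqLower_compl_general {S : Type*} (T : S → S → Prop)
    (hrefl : ∀ a, T a a) :
    ∀ X : Set S, sqBitten T X = (sqLower T Xᶜ)ᶜ := by
  intro X
  rw [sqBitten, Set.sdiff_eq, Set.inter_eq_right]
  exact Set.compl_subset_iff_union.mpr (sqLower_compl_union_sqUpper hrefl X)

/-- For a tolerance `T`, the bitten upper approximation is the dual under
complementation of the squeezed lower approximation: `X^{u_sb} = ((Xᶜ)^{l_s})ᶜ`. -/
theorem sqBitten_eq_compl_sqLower_compl {S : Type*} (T : S → S → Prop)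
    (hrefl : ∀ a, T a a) (hsymm : ∀ a b, T a b → T b a) :
    ∀ X : Set S, sqBitten T X = (sqLower T Xᶜ)ᶜ :=
  sqBitten_eq_compl_sqLower_compl_general T hrefl
end

section
/- Let T be a tolerance on a set S, 𝒯 its set of squeezed blocks and δ(S) the set of definable objects. For X, Z ∈ δ(S), define X → Z = ⋃{B ∈ 𝒯 : X ∩ B ⊆ Z}. Then X → Z ∈ δ(S), X ∩ (X → Z) ⊆ Z, and X → Z is the greatest such element of δ(S): for every Q ∈ δ(S), X ∩ Q ⊆ Z implies Q ⊆ X → Z. (This is the Heyting implication making δ(S) a Heyting algebra.) -/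
/-- The definable objects: unions of families of squeezed blocks. -/
def defObj {S : Type*} (T : S → S → Prop) : Set (Set S) :=
  {U | ∃ H ⊆ sqBlocks T, U = ⋃₀ H}

namespace Set

variable {α : Type*} (𝒯 : Set (Set α)) (X Z : Set α)

theorem inter_sUnion_sep_inter_subset_subset :
    X ∩ ⋃₀ {B | B ∈ 𝒯 ∧ X ∩ B ⊆ Z} ⊆ Z := by
  rintro x ⟨hxX, B, hB, hxB⟩
  exact hB.2 ⟨hxX, hxB⟩

theorem sUnion_subset_sUnion_sep_inter_subset {H : Set (Set α)} (hH : H ⊆ 𝒯)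
    (hHZ : X ∩ ⋃₀ H ⊆ Z) : ⋃₀ H ⊆ ⋃₀ {B | B ∈ 𝒯 ∧ X ∩ B ⊆ Z} :=
  sUnion_subset_sUnion fun _ hB =>
    ⟨hH hB, (inter_subset_inter_right X (subset_sUnion_of_mem hB)).trans hHZ⟩

end Set

theorem sUnion_sep_mem_defObj {S : Type*} (T : S → S → Prop) (p : Set S → Prop) :
    ⋃₀ {B | B ∈ sqBlocks T ∧ p B} ∈ defObj T :=
  ⟨_, fun _ hB => hB.1, rfl⟩

theorem defObj_heyting_implication_general {S : Type*} (T : S → S → Prop)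
    (X Z : Set S) :
    let imp : Set S := ⋃₀ {B | B ∈ sqBlocks T ∧ X ∩ B ⊆ Z}
    imp ∈ defObj T ∧ X ∩ imp ⊆ Z ∧
    ∀ Q ∈ defObj T, X ∩ Q ⊆ Z → Q ⊆ imp := by
  refine ⟨sUnion_sep_mem_defObj T _, Set.inter_sUnion_sep_inter_subset_subset _ X Z, ?_⟩
  rintro Q ⟨H, hH, rfl⟩
  exact Set.sUnion_subset_sUnion_sep_inter_subset _ X Z hH

/-- For definable `X, Z`, the set `X → Z = ⋃{B ∈ 𝒯 : X ∩ B ⊆ Z}` is definable,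
satisfies `X ∩ (X → Z) ⊆ Z`, and is the greatest definable set with this property:
the Heyting implication on `δ(S)`. -/
theorem defObj_heyting_implication {S : Type*} (T : S → S → Prop)
    (hrefl : ∀ a, T a a) (hsymm : ∀ a b, T a b → T b a)
    (X Z : Set S) (hX : X ∈ defObj T) (hZ : Z ∈ defObj T) :
    let imp : Set S := ⋃₀ {B | B ∈ sqBlocks T ∧ X ∩ B ⊆ Z}
    imp ∈ defObj T ∧ X ∩ imp ⊆ Z ∧
    ∀ Q ∈ defObj T, X ∩ Q ⊆ Z → Q ⊆ imp :=
  defObj_heyting_implication_general T X Z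
end
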